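/- arXiv:2009.13130 — 2 statements merged into one kernel-verified Lean document; each statement's English description precedes it below -/
import Mathlib

section
/- For all d ≥ 2 there exists a constant α_d > 0 such that for every integer μ ≥ 1, the number of primitive vectors v ∈ {0,…,μ}^d that are orthogonal to some nonzero lattice vector w ∈ ℤ^d with |w| ≤ α_d·μ^{1/d} is at most half the total number of primitive vectors in {0,…,μ}^d. -/
/-!
A vector `v` of the box `{0,…,μ}^d` is "bad" if it is orthogonal to a nonzero `w ∈ ℤ^d` with
`|w| ≤ R := α μ^(1/d)`. Such `w` lie in the cube `[-⌊R⌋, ⌊R⌋]^d`, so there are at most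
`(3R)^d = (3α)^d μ` of them (none if `R < 1`), and each is orthogonal to at most `(μ+1)^(d-1)`
points of the box. Hence there are at most `(3α)^d μ (μ+1)^(d-1) ≤ (6α)^d μ^d` bad vectors.
On the other hand, a non-primitive vector of `{1,…,μ}^d` has all coordinates divisible by some
`2 ≤ g ≤ μ`, and there are at most `(μ/g)^d ≤ μ^d/g²` of those; as `∑_{g ≥ 2} 1/g² ≤ 11/12`, at
least `μ^d/12` vectors of the box are primitive. Taking `α = 1/48` concludes.
-/

open Finset Fintype

theorem card_filter_sum_mul_eq_zero_le {ι R : Type*} [Fintype ι] [DecidableEq ι] [CommRing R]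
    [IsDomain R] [DecidableEq R] (s : Finset R) {w : ι → R} (hw : w ≠ 0) :
    #{v ∈ piFinset fun _ : ι => s | ∑ i, w i * v i = 0} ≤ #s ^ (card ι - 1) := by
  obtain ⟨i₀, hi₀⟩ := Function.ne_iff.mp hw
  calc #{v ∈ piFinset fun _ : ι => s | ∑ i, w i * v i = 0}
      ≤ #(piFinset fun _ : {j // j ≠ i₀} => s) := by
        refine card_le_card_of_injOn (fun v j => v j) (fun v hv => ?_) fun v hv v' hv' hvv' => ?_
        · simp_all
        · simp only [coe_filter, Fintype.mem_piFinset, Set.mem_ofPred_eq] at hv hv'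
          have hoff : ∀ j ≠ i₀, v j = v' j := fun j hj => congrFun hvv' ⟨j, hj⟩
          have hsum : w i₀ * (v i₀ - v' i₀) = 0 := by
            rw [← Fintype.sum_eq_single (f := fun i => w i * (v i - v' i)) i₀
              fun j hj => by rw [hoff j hj, sub_self, mul_zero]]
            simp only [mul_sub, sum_sub_distrib, hv.2, hv'.2, sub_self]
          have hi₀' : v i₀ = v' i₀ := sub_eq_zero.mp ((mul_eq_zero.mp hsum).resolve_left hi₀)
          funext j
          by_cases hj : j = i₀
          · rw [hj, hi₀']
          · exact hoff j hj
    _ = #s ^ (card ι - 1) := by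
        rw [card_piFinset, prod_const, card_univ, card_subtype_compl, card_subtype_eq]

theorem abs_le_sqrt_sum_sq {ι : Type*} [Fintype ι] (x : ι → ℝ) (i : ι) :
    |x i| ≤ √(∑ j, x j ^ 2) :=
  Real.abs_le_sqrt (single_le_sum (fun j _ => sq_nonneg (x j)) (mem_univ i))

theorem mem_erase_zero_piFinset_Icc_floor {ι : Type*} [Fintype ι] [DecidableEq ι] {R : ℝ}
    {w : ι → ℤ} (hw : w ≠ 0) (hwR : √(∑ i, (w i : ℝ) ^ 2) ≤ R) :
    w ∈ (piFinset fun _ : ι => Icc (-⌊R⌋) ⌊R⌋).erase 0 := by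
  refine mem_erase.mpr ⟨hw, Fintype.mem_piFinset.mpr fun i => mem_Icc.mpr (abs_le.mp ?_)⟩
  refine Int.le_floor.mpr ?_
  rw [Int.cast_abs]
  exact (abs_le_sqrt_sum_sq (fun j => (w j : ℝ)) i).trans hwR

theorem card_erase_zero_piFinset_Icc_floor_le {ι : Type*} [Fintype ι] [DecidableEq ι] {R : ℝ}
    (hR : 0 ≤ R) : (#((piFinset fun _ : ι => Icc (-⌊R⌋) ⌊R⌋).erase 0) : ℝ) ≤ (3 * R) ^ card ι := by
  have hM : 0 ≤ ⌊R⌋ := Int.floor_nonneg.mpr hR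
  have hcard : #(piFinset fun _ : ι => Icc (-⌊R⌋) ⌊R⌋) = (2 * ⌊R⌋ + 1).toNat ^ card ι := by
    rw [card_piFinset, prod_const, card_univ, Int.card_Icc]
    congr 2; ring
  rw [card_erase_of_mem (Fintype.mem_piFinset.mpr fun _ => by simp [hM]), hcard]
  rcases hM.eq_or_lt with hM0 | hM1
  · simp [← hM0]
    positivity
  · calc (((2 * ⌊R⌋ + 1).toNat ^ card ι - 1 : ℕ) : ℝ)
          ≤ (((2 * ⌊R⌋ + 1).toNat ^ card ι : ℕ) : ℝ) := Nat.cast_le.mpr (Nat.sub_le _ _)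
      _ = ((2 * ⌊R⌋ + 1).toNat : ℝ) ^ card ι := Nat.cast_pow _ _
      _ ≤ (3 * R) ^ card ι := by
          gcongr
          have : ((2 * ⌊R⌋ + 1).toNat : ℝ) = 2 * ⌊R⌋ + 1 := by
            exact_mod_cast Int.toNat_of_nonneg (by omega)
          have h1 : (1 : ℝ) ≤ ⌊R⌋ := by exact_mod_cast hM1
          rw [this]; linarith [Int.floor_le R]

open scoped Classical in
theorem card_filter_exists_short_orthogonal_le {ι : Type*} [Fintype ι] [DecidableEq ι] (n : ℕ)
    {R : ℝ} (hR : 0 ≤ R) :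
    (#{v ∈ piFinset fun _ : ι => Icc (0 : ℤ) n |
        ∃ w : ι → ℤ, w ≠ 0 ∧ ∑ i, w i * v i = 0 ∧ √(∑ i, (w i : ℝ) ^ 2) ≤ R} : ℝ) ≤
      (3 * R) ^ card ι * (n + 1) ^ (card ι - 1) := by
  set W := (piFinset fun _ : ι => Icc (-⌊R⌋) ⌊R⌋).erase 0
  have hcover : {v ∈ piFinset fun _ : ι => Icc (0 : ℤ) n |
        ∃ w : ι → ℤ, w ≠ 0 ∧ ∑ i, w i * v i = 0 ∧ √(∑ i, (w i : ℝ) ^ 2) ≤ R} ⊆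
      W.biUnion fun w => {v ∈ piFinset fun _ : ι => Icc (0 : ℤ) n | ∑ i, w i * v i = 0} := by
    intro v hv
    obtain ⟨hv, w, hw, hwv, hwR⟩ := mem_filter.mp hv
    exact mem_biUnion.mpr ⟨w, mem_erase_zero_piFinset_Icc_floor hw hwR, mem_filter.mpr ⟨hv, hwv⟩⟩
  have hcount : ∀ w ∈ W,
      #{v ∈ piFinset fun _ : ι => Icc (0 : ℤ) n | ∑ i, w i * v i = 0} ≤ (n + 1) ^ (card ι - 1) :=
    fun w hw => by
      simpa using card_filter_sum_mul_eq_zero_le (Icc (0 : ℤ) n) (ne_of_mem_erase hw)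
  calc _ ≤ ((#W * (n + 1) ^ (card ι - 1) : ℕ) : ℝ) := by
        gcongr
        exact (card_le_card hcover).trans (card_biUnion_le_card_mul _ _ _ hcount)
    _ ≤ (3 * R) ^ card ι * (n + 1) ^ (card ι - 1) := by
        push_cast
        gcongr
        exact card_erase_zero_piFinset_Icc_floor_le hR

theorem mul_add_one_pow_pred_le {x : ℝ} (hx : 1 ≤ x) {d : ℕ} (hd : d ≠ 0) :
    x * (x + 1) ^ (d - 1) ≤ (2 * x) ^ d := by
  obtain ⟨k, rfl⟩ := Nat.exists_eq_add_one_of_ne_zero hd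
  rw [Nat.add_sub_cancel, pow_succ, mul_comm]
  gcongr <;> linarith

open scoped Classical in
theorem card_filter_exists_orthogonal_le_mul_rpow {ι : Type*} [Fintype ι] [DecidableEq ι]
    [Nonempty ι] {n : ℕ} (hn : 1 ≤ n) {α : ℝ} (hα : 0 ≤ α) :
    (#{v ∈ piFinset fun _ : ι => Icc (0 : ℤ) n | ∃ w : ι → ℤ, w ≠ 0 ∧ ∑ i, w i * v i = 0 ∧
        √(∑ i, (w i : ℝ) ^ 2) ≤ α * (n : ℝ) ^ ((1 : ℝ) / card ι)} : ℝ) ≤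
      (6 * α) ^ card ι * n ^ card ι := by
  have hι : card ι ≠ 0 := card_ne_zero
  calc _ ≤ (3 * (α * (n : ℝ) ^ ((1 : ℝ) / card ι))) ^ card ι * (n + 1) ^ (card ι - 1) :=
        card_filter_exists_short_orthogonal_le n (by positivity)
    _ = (3 * α) ^ card ι * (n * (n + 1) ^ (card ι - 1)) := by
        rw [← mul_assoc, mul_pow, one_div, Real.rpow_inv_natCast_pow n.cast_nonneg hι, mul_assoc]
    _ ≤ (3 * α) ^ card ι * (2 * n) ^ card ι := by
        gcongr
        exact mul_add_one_pow_pred_le (by exact_mod_cast hn) hι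
    _ = (6 * α) ^ card ι * n ^ card ι := by rw [← mul_pow, ← mul_pow]; ring_nf

theorem card_filter_forall_dvd_le {ι : Type*} [Fintype ι] [DecidableEq ι] (n : ℕ) {g : ℕ}
    (hg : 0 < g) :
    #{v ∈ piFinset fun _ : ι => Icc (1 : ℤ) n | ∀ i, (g : ℤ) ∣ v i} ≤ (n / g) ^ card ι := by
  have hg' : (0 : ℤ) < g := by exact_mod_cast hg
  calc #{v ∈ piFinset fun _ : ι => Icc (1 : ℤ) n | ∀ i, (g : ℤ) ∣ v i}
      ≤ #(piFinset fun _ : ι => Icc (1 : ℤ) (n / g : ℕ)) := by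
        refine card_le_card_of_injOn (fun v i => v i / g) (fun v hv => ?_)
          fun v hv v' hv' hvv' => ?_
        · simp only [coe_filter, Fintype.mem_piFinset, mem_Icc, Set.mem_ofPred_eq] at hv
          simp only [coe_piFinset, Set.mem_pi, Set.mem_univ, coe_Icc, Set.mem_Icc, Int.natCast_div,
            forall_const]
          exact fun i => ⟨Int.ediv_pos_of_pos_of_dvd (by linarith [(hv.1 i).1]) hg'.le (hv.2 i),
            Int.ediv_le_ediv hg' (hv.1 i).2⟩
        · simp only [coe_filter, Set.mem_ofPred_eq] at hv hv'
          exact funext fun i => (Int.ediv_left_inj (hv.2 i) (hv'.2 i)).mp (congrFun hvv' i)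
    _ = (n / g) ^ card ι := by
        simp only [card_piFinset, prod_const, card_univ, Int.card_Icc, add_sub_cancel_right,
          Int.toNat_natCast]

theorem sum_Ioo_one_inv_sq_le (m : ℕ) : ∑ g ∈ Ioo 1 m, ((g : ℝ) ^ 2)⁻¹ ≤ 11 / 12 := by
  calc ∑ g ∈ Ioo 1 m, ((g : ℝ) ^ 2)⁻¹ ≤ ∑ g ∈ insert 2 (Ioo 2 m), ((g : ℝ) ^ 2)⁻¹ :=
        sum_le_sum_of_subset_of_nonneg (fun g hg => by simp at hg ⊢; omega)
          fun _ _ _ => by positivity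
    _ = (2 ^ 2)⁻¹ + ∑ g ∈ Ioo 2 m, ((g : ℝ) ^ 2)⁻¹ := by
        rw [sum_insert (by simp)]; norm_num
    _ ≤ 11 / 12 := by
        have := sum_Ioo_inv_sq_le (α := ℝ) 2 m
        norm_num at this ⊢
        linarith

theorem card_filter_gcd_ne_one_le {ι : Type*} [Fintype ι] [DecidableEq ι] (hι : 2 ≤ card ι)
    (n : ℕ) :
    (#{v ∈ piFinset fun _ : ι => Icc (1 : ℤ) n | univ.gcd v ≠ 1} : ℝ) ≤ 11 / 12 * n ^ card ι := by
  obtain ⟨i⟩ : Nonempty ι := card_pos_iff.mp (by omega)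
  have hcover : {v ∈ piFinset fun _ : ι => Icc (1 : ℤ) n | univ.gcd v ≠ 1} ⊆
      (Ioo 1 (n + 1)).biUnion fun g =>
        {v ∈ piFinset fun _ : ι => Icc (1 : ℤ) n | ∀ i, (g : ℤ) ∣ v i} := by
    intro v hv
    simp only [mem_filter, Fintype.mem_piFinset, mem_Icc] at hv
    obtain ⟨hbox, hgcd⟩ := hv
    have hnonneg : 0 ≤ univ.gcd v := Int.nonneg_of_normalize_eq_self normalize_gcd
    have hne : univ.gcd v ≠ 0 := fun h => by
      linarith [gcd_eq_zero_iff.mp h i (mem_univ i), (hbox i).1]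
    have hle : univ.gcd v ≤ n :=
      (Int.le_of_dvd (by linarith [(hbox i).1]) (gcd_dvd (mem_univ i))).trans (hbox i).2
    refine mem_biUnion.mpr ⟨(univ.gcd v).toNat, ?_, mem_filter.mpr ⟨?_, fun j => ?_⟩⟩
    · simp only [mem_Ioo]; omega
    · simpa using hbox
    · rw [Int.toNat_of_nonneg hnonneg]; exact gcd_dvd (mem_univ j)
  have hterm : ∀ g ∈ Ioo 1 (n + 1),
      (((n / g) ^ card ι : ℕ) : ℝ) ≤ n ^ card ι * ((g : ℝ) ^ 2)⁻¹ := by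
    intro g hg
    have hg1 : (1 : ℝ) ≤ g := by exact_mod_cast (mem_Ioo.mp hg).1.le
    calc (((n / g) ^ card ι : ℕ) : ℝ) ≤ ((n : ℝ) / g) ^ card ι := by
          push_cast; gcongr; exact Nat.cast_div_le
      _ = n ^ card ι * ((g : ℝ) ^ card ι)⁻¹ := by rw [div_pow, div_eq_mul_inv]
      _ ≤ n ^ card ι * ((g : ℝ) ^ 2)⁻¹ := by gcongr
  calc (#{v ∈ piFinset fun _ : ι => Icc (1 : ℤ) n | univ.gcd v ≠ 1} : ℝ)
      ≤ ∑ g ∈ Ioo 1 (n + 1), (((n / g) ^ card ι : ℕ) : ℝ) := by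
        rw [← Nat.cast_sum]
        gcongr
        exact (card_le_card hcover).trans <| card_biUnion_le.trans <|
          sum_le_sum fun g hg => card_filter_forall_dvd_le n (by simp at hg; omega)
    _ ≤ ∑ g ∈ Ioo 1 (n + 1), n ^ card ι * ((g : ℝ) ^ 2)⁻¹ := sum_le_sum hterm
    _ ≤ 11 / 12 * n ^ card ι := by
        rw [← mul_sum, mul_comm]
        gcongr
        exact sum_Ioo_one_inv_sq_le _

theorem card_filter_gcd_eq_one_ge {ι : Type*} [Fintype ι] [DecidableEq ι] (hι : 2 ≤ card ι)
    (n : ℕ) :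
    (n : ℝ) ^ card ι / 12 ≤ #{v ∈ piFinset fun _ : ι => Icc (0 : ℤ) n | univ.gcd v = 1} := by
  have hsplit : (#{v ∈ piFinset fun _ : ι => Icc (1 : ℤ) n | univ.gcd v = 1} : ℝ) +
      #{v ∈ piFinset fun _ : ι => Icc (1 : ℤ) n | univ.gcd v ≠ 1} = n ^ card ι := by
    exact_mod_cast (card_filter_add_card_filter_not _).trans (by simp)
  have hmono : (#{v ∈ piFinset fun _ : ι => Icc (1 : ℤ) n | univ.gcd v = 1} : ℝ) ≤
      #{v ∈ piFinset fun _ : ι => Icc (0 : ℤ) n | univ.gcd v = 1} := by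
    exact_mod_cast card_le_card <| filter_subset_filter _ <| piFinset_subset _ _ fun _ =>
      Icc_subset_Icc_left zero_le_one
  linarith [card_filter_gcd_ne_one_le hι n]

/-- For `d ≥ 2` there is `α_d > 0` such that for every `μ ≥ 1`, the number of
primitive vectors in `{0,…,μ}^d` orthogonal to some nonzero lattice vector of norm at most
`α_d · μ^(1/d)` is at most half of all primitive vectors in `{0,…,μ}^d`. -/
theorem stmt8 (d : ℕ) (hd : 2 ≤ d) :
    ∃ α : ℝ, 0 < α ∧ ∀ μ : ℕ, 1 ≤ μ →
      2 * ({v : Fin d → ℤ | (∀ i, 0 ≤ v i ∧ v i ≤ (μ : ℤ)) ∧ Finset.univ.gcd v = 1 ∧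
              ∃ w : Fin d → ℤ, w ≠ 0 ∧ (∑ i, w i * v i = 0) ∧
                Real.sqrt (∑ i, ((w i : ℝ)) ^ 2) ≤ α * (μ : ℝ) ^ ((1 : ℝ) / d)}).ncard
        ≤ ({v : Fin d → ℤ | (∀ i, 0 ≤ v i ∧ v i ≤ (μ : ℤ)) ∧
              Finset.univ.gcd v = 1}).ncard := by
  classical
  refine ⟨1 / 48, by norm_num, fun μ hμ => ?_⟩
  have : Nonempty (Fin d) := ⟨⟨0, by omega⟩⟩
  set short := {v ∈ piFinset fun _ : Fin d => Icc (0 : ℤ) μ | ∃ w : Fin d → ℤ, w ≠ 0 ∧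
    ∑ i, w i * v i = 0 ∧ √(∑ i, (w i : ℝ) ^ 2) ≤ 1 / 48 * (μ : ℝ) ^ ((1 : ℝ) / d)}
  set primitive := {v ∈ piFinset fun _ : Fin d => Icc (0 : ℤ) μ | univ.gcd v = 1}
  suffices (2 * #short : ℝ) ≤ #primitive by
    have hshort : {v : Fin d → ℤ | (∀ i, 0 ≤ v i ∧ v i ≤ (μ : ℤ)) ∧ Finset.univ.gcd v = 1 ∧
        ∃ w : Fin d → ℤ, w ≠ 0 ∧ (∑ i, w i * v i = 0) ∧
          √(∑ i, ((w i : ℝ)) ^ 2) ≤ 1 / 48 * (μ : ℝ) ^ ((1 : ℝ) / d)} ⊆ ↑short :=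
      fun v hv => by simp_all [short]
    have hprimitive : {v : Fin d → ℤ | (∀ i, 0 ≤ v i ∧ v i ≤ (μ : ℤ)) ∧
        Finset.univ.gcd v = 1} = ↑primitive := by
      ext v; simp [primitive]
    rw [hprimitive, Set.ncard_coe_finset]
    refine (Nat.mul_le_mul_left 2 ?_).trans (by exact_mod_cast this)
    exact (Set.ncard_le_ncard hshort).trans_eq (Set.ncard_coe_finset _)
  calc (2 * #short : ℝ) ≤ 2 * ((6 * (1 / 48)) ^ d * μ ^ d) := by
        gcongr
        simpa only [Fintype.card_fin] using
          card_filter_exists_orthogonal_le_mul_rpow (ι := Fin d) hμ (by norm_num : (0 : ℝ) ≤ 1 / 48)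
    _ ≤ 2 * ((1 / 8) ^ 2 * μ ^ d) := by
        gcongr
        exact (pow_le_pow_of_le_one (by norm_num) (by norm_num) hd).trans_eq' (by norm_num)
    _ ≤ μ ^ d / 12 := by linarith [pow_nonneg μ.cast_nonneg (M₀ := ℝ) d]
    _ ≤ #primitive := by simpa using card_filter_gcd_eq_one_ge (ι := Fin d) (by simpa) μ
end

section
/- Let d ≥ 3 and suppose τ({1,…,n}^{d−1}) ≤ f(n) for all n, where τ is the layer number. Then after O(f(n)) peeling steps of any subset A ⊆ {1,…,n}^d, no points of A remain on the boundary of the cube [1,n]^d, and therefore τ({1,…,n}^d) = O(n·f(n)). -/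
/-- The set of extreme points (convex-hull vertices) of a set `X`:
points of `X` not in the convex hull of the rest. -/
def extremeSet {E : Type*} [AddCommGroup E] [Module ℝ E] (X : Set E) : Set E :=
  {x ∈ X | x ∉ convexHull ℝ (X \ {x})}

/-- The peeling process: `peel X 0 = X`, and each step removes the extreme points. -/
def peel {E : Type*} [AddCommGroup E] [Module ℝ E] (X : Set E) : ℕ → Set E
  | 0 => X
  | i + 1 => peel X i \ extremeSet (peel X i)

/-- The layer number: the least number of peeling steps after which nothing remains. -/
noncomputable def layerNumber {E : Type*} [AddCommGroup E] [Module ℝ E] (X : Set E) : ℕ :=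
  sInf {i | peel X i = ∅}

/-- The grid `{1,…,n}^d` as a set of points of `ℝ^d` with integer coordinates. -/
def gridSet (d n : ℕ) : Set (Fin d → ℝ) :=
  {x | ∀ i, ∃ k : ℤ, 1 ≤ k ∧ k ≤ (n : ℤ) ∧ x i = (k : ℝ)}

section PeelBasic

variable {E : Type*} [AddCommGroup E] [Module ℝ E]

lemma peel_subset (X : Set E) : ∀ i, peel X i ⊆ X
  | 0 => subset_rfl
  | i + 1 => Set.diff_subset.trans (peel_subset X i)

lemma peel_le (X : Set E) {i j : ℕ} (h : i ≤ j) : peel X j ⊆ peel X i := by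
  obtain ⟨k, rfl⟩ := Nat.exists_eq_add_of_le h
  clear h
  induction k with
  | zero => exact subset_rfl
  | succ k ih => exact (Set.diff_subset : peel X (i + k + 1) ⊆ peel X (i + k)).trans ih

lemma mem_of_mem_peel_succ {X : Set E} {i : ℕ} {x : E} (hx : x ∈ peel X (i + 1)) :
    x ∈ peel X i ∧ x ∈ convexHull ℝ (peel X i \ {x}) := by
  obtain ⟨h1, h2⟩ := hx
  refine ⟨h1, ?_⟩
  by_contra h
  exact h2 ⟨h1, h⟩

lemma mem_peel_succ {X : Set E} {i : ℕ} {x : E} (h1 : x ∈ peel X i)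
    (h2 : x ∈ convexHull ℝ (peel X i \ {x})) : x ∈ peel X (i + 1) :=
  ⟨h1, fun he => he.2 h2⟩

lemma peel_mono {A B : Set E} (h : A ⊆ B) : ∀ i, peel A i ⊆ peel B i := by
  intro i
  induction i with
  | zero => exact h
  | succ i ih =>
    intro x hx
    obtain ⟨h1, h2⟩ := mem_of_mem_peel_succ hx
    exact mem_peel_succ (ih h1)
      (convexHull_mono (Set.diff_subset_diff_left ih) h2)

lemma peel_add (X : Set E) (i j : ℕ) : peel X (i + j) = peel (peel X i) j := by
  induction j with
  | zero => rfl
  | succ j ih =>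
    show peel X (i + j) \ extremeSet (peel X (i + j)) =
      peel (peel X i) j \ extremeSet (peel (peel X i) j)
    rw [ih]

lemma peel_empty_of_le {X : Set E} {i j : ℕ} (h : peel X i = ∅) (hij : i ≤ j) :
    peel X j = ∅ :=
  Set.eq_empty_of_subset_empty (h ▸ peel_le X hij)

/-- The face lemma: a point of the hull lying on a supporting hyperplane is in the
hull of the part of the set lying on that hyperplane. -/
lemma face_lemma (φ : E →ₗ[ℝ] ℝ) (c : ℝ) {S : Set E}
    (hS : ∀ y ∈ S, φ y ≤ c) {x : E} (hx : x ∈ convexHull ℝ S) (hxc : φ x = c) :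
    x ∈ convexHull ℝ {y ∈ S | φ y = c} := by
  rw [convexHull_eq] at hx
  obtain ⟨ι, t, w, z, hw0, hw1, hz, hcm⟩ := hx
  have hcm' : ∑ i ∈ t, w i • z i = x := by
    rw [← hcm, Finset.centerMass, hw1, inv_one, one_smul]
  have hφx : ∑ i ∈ t, w i * φ (z i) = c := by
    have := congrArg φ hcm'
    rw [map_sum] at this
    simpa [hxc] using this
  have hzero : ∑ i ∈ t, w i * (c - φ (z i)) = 0 := by
    simp only [mul_sub, Finset.sum_sub_distrib, ← Finset.sum_mul, hw1, hφx, one_mul, sub_self]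
  have h0 : ∀ i ∈ t, 0 ≤ w i * (c - φ (z i)) := fun i hi =>
    mul_nonneg (hw0 i hi) (by linarith [hS _ (hz i hi)])
  have hkey : ∀ i ∈ t, w i ≠ 0 → φ (z i) = c := by
    intro i hi hwi
    have hz0 := (Finset.sum_eq_zero_iff_of_nonneg h0).1 hzero i hi
    have hwpos : 0 < w i := lt_of_le_of_ne (hw0 i hi) (Ne.symm hwi)
    have := hS _ (hz i hi)
    nlinarith
  rw [← hcm, ← Finset.centerMass_filter_ne_zero]
  refine Finset.centerMass_mem_convexHull _ (fun i hi => hw0 i (Finset.mem_filter.1 hi).1) ?_ ?_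
  · rw [Finset.sum_filter_ne_zero, hw1]; exact one_pos
  · intro i hi
    obtain ⟨hit, hwi⟩ := Finset.mem_filter.1 hi
    exact ⟨hz i hit, hkey i hit hwi⟩

/-- Domination lemma: peeling restricted to a supporting hyperplane is dominated by
the peeling of the intersection with the hyperplane. -/
lemma peel_hyperplane (φ : E →ₗ[ℝ] ℝ) (c : ℝ) {B : Set E}
    (hB : ∀ y ∈ B, φ y ≤ c) :
    ∀ i, ∀ x ∈ peel B i, φ x = c → x ∈ peel (B ∩ {y | φ y = c}) i := by
  intro i
  induction i with
  | zero => exact fun x hx hxc => ⟨hx, hxc⟩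
  | succ i ih =>
    intro x hx hxc
    obtain ⟨h1, h2⟩ := mem_of_mem_peel_succ hx
    refine mem_peel_succ (ih x h1 hxc) ?_
    have hsub : ∀ y ∈ peel B i \ {x}, φ y ≤ c := fun y hy => hB y (peel_subset B i hy.1)
    have hface := face_lemma φ c hsub h2 hxc
    refine convexHull_mono ?_ hface
    rintro y ⟨⟨hyB, hyx⟩, hyc⟩
    exact ⟨ih y hyB hyc, hyx⟩

end PeelBasic

section Extreme

/-- Every finite nonempty subset of `ℝ^d` has an extreme point. -/
lemma exists_extreme_aux (d : ℕ) : ∀ (N : ℕ) (X : Set (Fin d → ℝ)), X.Finite → X.Nonempty →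
    X.ncard ≤ N → ∃ x ∈ X, x ∉ convexHull ℝ (X \ {x}) := by
  intro N
  induction N with
  | zero =>
    intro X hfin hne hcard
    have hpos : 0 < X.ncard := hne.ncard_pos hfin
    omega
  | succ N ih =>
    intro X hfin hne hcard
    by_cases hone : ∃ a ∈ X, ∃ b ∈ X, a ≠ b
    · obtain ⟨a, ha, b, hb, hab⟩ := hone
      have hj : ∃ j, a j ≠ b j := by
        by_contra h; push_neg at h; exact hab (funext h)
      obtain ⟨j, hj⟩ := hj
      obtain ⟨p, hp, hpmax⟩ := Set.exists_max_image X (fun y => y j) hfin hne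
      set c := p j with hc
      set X' := {y ∈ X | y j = c} with hX'
      have hsub : X' ⊆ X := fun y hy => hy.1
      have hne' : X'.Nonempty := ⟨p, hp, rfl⟩
      have hssub : X' ⊂ X := by
        refine ⟨hsub, fun hXsub => ?_⟩
        have haj : a j = c := (hXsub ha).2
        have hbj : b j = c := (hXsub hb).2
        exact hj (haj.trans hbj.symm)
      have hcard' : X'.ncard ≤ N := by
        have := Set.ncard_lt_ncard hssub hfin
        omega
      obtain ⟨x, hx, hxn⟩ := ih X' (hfin.subset hsub) hne' hcard'
      refine ⟨x, hx.1, fun hcontra => ?_⟩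
      have hb2 : ∀ y ∈ X \ {x}, (LinearMap.proj j : (Fin d → ℝ) →ₗ[ℝ] ℝ) y ≤ c :=
        fun y hy => hpmax y hy.1
      have hface := face_lemma (LinearMap.proj j) c hb2 hcontra hx.2
      apply hxn
      refine convexHull_mono ?_ hface
      rintro y ⟨⟨hyX, hyx⟩, hyc⟩
      exact ⟨⟨hyX, hyc⟩, hyx⟩
    · push_neg at hone
      obtain ⟨x, hx⟩ := hne
      refine ⟨x, hx, ?_⟩
      have hempty : X \ {x} = ∅ := by
        ext y
        simp only [Set.mem_diff, Set.mem_singleton_iff, Set.mem_empty_iff_false, iff_false,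
          not_and, not_not]
        exact fun hy => hone y hy x hx
      rw [hempty, convexHull_empty]
      exact Set.notMem_empty x

/-- Finite sets are fully peeled after at most `ncard` many steps. -/
lemma peel_ncard (d : ℕ) : ∀ (i : ℕ) (X : Set (Fin d → ℝ)), X.Finite →
    X.ncard ≤ i → peel X i = ∅ := by
  intro i
  induction i with
  | zero =>
    intro X hfin hc
    have : X = ∅ := by
      rw [← Set.ncard_eq_zero hfin]; omega
    exact this
  | succ i ih =>
    intro X hfin hc
    rcases X.eq_empty_or_nonempty with rfl | hne
    · exact Set.eq_empty_of_subset_empty (peel_subset ∅ _)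
    · obtain ⟨x, hxX, hxe⟩ := exists_extreme_aux d X.ncard X hfin hne le_rfl
      have hss : peel X 1 ⊂ X := by
        refine ⟨peel_subset X 1, fun h => ?_⟩
        have hx1 : x ∈ peel X 1 := h hxX
        exact hx1.2 ⟨hxX, hxe⟩
      have hlt := Set.ncard_lt_ncard hss hfin
      have h1i : peel X (1 + i) = ∅ := by
        rw [peel_add]
        exact ih (peel X 1) (hfin.subset (peel_subset X 1)) (by omega)
      rwa [Nat.add_comm] at h1i

end Extreme

section Insert

variable {m : ℕ}

lemma insertNth_add' (j : Fin (m + 1)) (a b : ℝ) (y z : Fin m → ℝ) :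
    Fin.insertNth (α := fun _ => ℝ) j (a + b) (y + z) =
      Fin.insertNth (α := fun _ => ℝ) j a y + Fin.insertNth (α := fun _ => ℝ) j b z := by
  funext l
  induction l using Fin.succAboveCases
  case i => exact j
  case x => simp
  case p => simp [Fin.insertNth_apply_succAbove]

lemma insertNth_smul' (j : Fin (m + 1)) (r a : ℝ) (y : Fin m → ℝ) :
    Fin.insertNth (α := fun _ => ℝ) j (r * a) (r • y) =
      r • Fin.insertNth (α := fun _ => ℝ) j a y := by
  funext l
  induction l using Fin.succAboveCases
  case i => exact j
  case x => simp
  case p => simp [Fin.insertNth_apply_succAbove]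

/-- Inserting a fixed coordinate `c` at position `j`, as an affine map `ℝ^m → ℝ^{m+1}`. -/
noncomputable def insAff (j : Fin (m + 1)) (c : ℝ) : (Fin m → ℝ) →ᵃ[ℝ] (Fin (m + 1) → ℝ) where
  toFun y := j.insertNth c y
  linear :=
    { toFun := fun y => j.insertNth 0 y
      map_add' := by
        intro y z
        simpa using insertNth_add' j 0 0 y z
      map_smul' := by
        intro r y
        simpa using insertNth_smul' j r 0 y }
  map_vadd' := by
    intro p v
    simpa using insertNth_add' j 0 c v p

lemma insAff_apply (j : Fin (m + 1)) (c : ℝ) (y : Fin m → ℝ) :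
    insAff j c y = j.insertNth c y := rfl

lemma insAff_inj (j : Fin (m + 1)) (c : ℝ) : Function.Injective (insAff j c) := by
  intro y z h
  funext i
  have := congrFun h (j.succAbove i)
  simpa [insAff_apply, Fin.insertNth_apply_succAbove] using this

end Insert

section Image

variable {E F : Type*} [AddCommGroup E] [Module ℝ E] [AddCommGroup F] [Module ℝ F]

lemma extremeSet_image (T : E →ᵃ[ℝ] F) (hT : Function.Injective T) (X : Set E) :
    extremeSet (T '' X) = T '' extremeSet X := by
  have himg : ∀ x : E, T '' X \ {T x} = T '' (X \ {x}) := by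
    intro x
    rw [Set.image_diff hT, Set.image_singleton]
  ext y
  constructor
  · rintro ⟨⟨x, hxX, rfl⟩, h2⟩
    refine ⟨x, ⟨hxX, fun hc => h2 ?_⟩, rfl⟩
    rw [himg, ← AffineMap.image_convexHull]
    exact Set.mem_image_of_mem _ hc
  · rintro ⟨x, ⟨hxX, hxe⟩, rfl⟩
    refine ⟨Set.mem_image_of_mem _ hxX, fun hc => hxe ?_⟩
    rw [himg, ← AffineMap.image_convexHull] at hc
    exact hT.mem_set_image.1 hc

lemma peel_image (T : E →ᵃ[ℝ] F) (hT : Function.Injective T) (X : Set E) :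
    ∀ i, peel (T '' X) i = T '' peel X i := by
  intro i
  induction i with
  | zero => rfl
  | succ i ih =>
    show peel (T '' X) i \ extremeSet (peel (T '' X) i) = _
    rw [ih, extremeSet_image T hT, ← Set.image_diff hT]
    rfl

end Image

section Grid

lemma gridSet_finite (d n : ℕ) : (gridSet d n).Finite := by
  have hsub : gridSet d n ⊆ (fun k : Fin d → ℤ => fun i => (k i : ℝ)) ''
      (Set.pi Set.univ fun _ : Fin d => Set.Icc (1 : ℤ) n) := by
    intro x hx
    refine ⟨fun i => (hx i).choose, fun i _ => ⟨(hx i).choose_spec.1, (hx i).choose_spec.2.1⟩, ?_⟩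
    funext i
    exact ((hx i).choose_spec.2.2).symm
  exact (((Set.Finite.pi fun _ => Set.finite_Icc _ _).image _)).subset hsub

lemma grid_bounds {d n : ℕ} {x : Fin d → ℝ} (hx : x ∈ gridSet d n) (j : Fin d) :
    1 ≤ x j ∧ x j ≤ (n : ℝ) := by
  obtain ⟨k, h1, h2, h3⟩ := hx j
  rw [h3]
  exact ⟨by exact_mod_cast h1, by exact_mod_cast h2⟩

lemma facet_subset (m n : ℕ) (j : Fin (m + 1)) (c : ℝ) {y : Fin (m + 1) → ℝ}
    (hy : y ∈ gridSet (m + 1) n) (hyc : y j = c) : y ∈ (insAff j c) '' gridSet m n := by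
  refine ⟨Fin.removeNth j y, fun i => ?_, ?_⟩
  · exact hy (j.succAbove i)
  · rw [insAff_apply, ← hyc]
    exact Fin.insertNth_self_removeNth j y

/-- KEY: after enough peeling steps of any subset of the grid, no points remain on a
supporting coordinate hyperplane. -/
lemma key_lemma {m n N : ℕ} (hfn : peel (gridSet m n) N = ∅)
    (j : Fin (m + 1)) (c : ℝ) {B : Set (Fin (m + 1) → ℝ)} (hB : B ⊆ gridSet (m + 1) n)
    (hside : (∀ y ∈ B, y j ≤ c) ∨ (∀ y ∈ B, c ≤ y j))
    {i : ℕ} (hi : N ≤ i) {x : Fin (m + 1) → ℝ} (hx : x ∈ peel B i) : x j ≠ c := by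
  intro hxc
  have hmem : x ∈ peel (B ∩ {y | y j = c}) i := by
    rcases hside with h | h
    · have hres := peel_hyperplane (LinearMap.proj j) c (fun y hy => h y hy) i x hx hxc
      convert hres using 3
      ext y; simp
    · have hres := peel_hyperplane (-(LinearMap.proj j : (Fin (m + 1) → ℝ) →ₗ[ℝ] ℝ)) (-c)
        (fun y hy => by simpa using h y hy) i x hx (by simpa using hxc)
      have hset : {y : Fin (m + 1) → ℝ |
          (-(LinearMap.proj j : (Fin (m + 1) → ℝ) →ₗ[ℝ] ℝ)) y = -c} = {y | y j = c} := by
        ext y; simp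
      rwa [hset] at hres
  have h2 : B ∩ {y | y j = c} ⊆ (insAff j c) '' gridSet m n :=
    fun y hy => facet_subset m n j c (hB hy.1) hy.2
  have h3 : x ∈ peel ((insAff j c) '' gridSet m n) i := peel_mono h2 i hmem
  have h4 : peel ((insAff j c) '' gridSet m n) i = ∅ := by
    rw [peel_image (insAff j c) (insAff_inj j c), peel_empty_of_le hfn hi, Set.image_empty]
  rw [h4] at h3
  exact h3

end Grid

/-- If `τ({1,…,n}^{d-1}) ≤ f(n)` for all `n`, then there is a constant `C`
such that after `C·f(n)` peeling steps of any `A ⊆ {1,…,n}^d` no points remain on the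
boundary of `[1,n]^d`, and consequently `τ({1,…,n}^d) ≤ C·n·f(n)`. -/
theorem stmt16 (d : ℕ) (hd : 3 ≤ d) (f : ℕ → ℕ)
    (hf : ∀ n, layerNumber (gridSet (d - 1) n) ≤ f n) :
    ∃ C : ℕ, 0 < C ∧
      (∀ n : ℕ, 1 ≤ n → ∀ A ⊆ gridSet d n, ∀ i : ℕ, C * f n ≤ i →
        ∀ x ∈ peel A i, ∀ j, 1 < x j ∧ x j < n) ∧
      (∀ n : ℕ, 1 ≤ n → layerNumber (gridSet d n) ≤ C * n * f n) := by
  obtain ⟨m, rfl⟩ : ∃ m, d = m + 1 := ⟨d - 1, by omega⟩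
  have hf' : ∀ n, layerNumber (gridSet m n) ≤ f n := by simpa using hf
  have hfn : ∀ n : ℕ, peel (gridSet m n) (f n) = ∅ := by
    intro n
    have hterm : peel (gridSet m n) ((gridSet m n).ncard) = ∅ :=
      peel_ncard m _ _ (gridSet_finite m n) le_rfl
    have hne : {i | peel (gridSet m n) i = ∅}.Nonempty := ⟨_, hterm⟩
    have hmem : peel (gridSet m n) (layerNumber (gridSet m n)) = ∅ :=
      Nat.sInf_mem hne
    exact peel_empty_of_le hmem (hf' n)
  refine ⟨1, one_pos, ?_, ?_⟩
  · intro n hn A hA i hi x hx j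
    have hxA : x ∈ A := peel_subset A i hx
    have hxg : x ∈ gridSet (m + 1) n := hA hxA
    have hi' : f n ≤ i := by omega
    have h1 : x j ≠ 1 :=
      key_lemma (hfn n) j 1 hA (Or.inr fun y hy => (grid_bounds (hA hy) j).1) hi' hx
    have h2 : x j ≠ (n : ℝ) :=
      key_lemma (hfn n) j (n : ℝ) hA (Or.inl fun y hy => (grid_bounds (hA hy) j).2) hi' hx
    exact ⟨lt_of_le_of_ne (grid_bounds hxg j).1 (Ne.symm h1),
      lt_of_le_of_ne (grid_bounds hxg j).2 h2⟩
  · intro n hn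
    have shell : ∀ k : ℕ, ∀ x ∈ peel (gridSet (m + 1) n) (k * f n), ∀ j : Fin (m + 1),
        (k : ℝ) < x j ∧ x j < (n : ℝ) + 1 - k := by
      intro k
      induction k with
      | zero =>
        intro x hx j
        have hxg := peel_subset _ _ hx
        have hb := grid_bounds hxg j
        constructor
        · push_cast; linarith [hb.1]
        · push_cast; linarith [hb.2]
      | succ k ih =>
        intro x hx j
        have hstep : peel (gridSet (m + 1) n) ((k + 1) * f n) =
            peel (peel (gridSet (m + 1) n) (k * f n)) (f n) := by
          rw [← peel_add]
          ring_nf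
        set B := peel (gridSet (m + 1) n) (k * f n) with hBdef
        rw [hstep] at hx
        have hBg : B ⊆ gridSet (m + 1) n := peel_subset _ _
        have hxB : x ∈ B := peel_subset B (f n) hx
        have hlow : ∀ y ∈ B, ((k : ℝ) + 1) ≤ y j := by
          intro y hy
          have hyk := (ih y hy j).1
          obtain ⟨ky, hk1, hk2, hk3⟩ := hBg hy j
          rw [hk3] at hyk ⊢
          have hint : (k : ℤ) < ky := by exact_mod_cast hyk
          exact_mod_cast (by omega : (k : ℤ) + 1 ≤ ky)
        have hhigh : ∀ y ∈ B, y j ≤ (n : ℝ) - k := by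
          intro y hy
          have hyk := (ih y hy j).2
          obtain ⟨ky, hk1, hk2, hk3⟩ := hBg hy j
          rw [hk3] at hyk ⊢
          have hint : (ky : ℤ) < (n : ℤ) + 1 - k := by
            have : (ky : ℝ) < (n : ℝ) + 1 - k := hyk
            exact_mod_cast (by push_cast; linarith : ((ky : ℤ) : ℝ) < ((n : ℤ) + 1 - k : ℤ))
          have : (ky : ℤ) ≤ (n : ℤ) - k := by omega
          exact_mod_cast (by exact_mod_cast this : ((ky : ℤ) : ℝ) ≤ (n : ℝ) - k)
        have h1 : x j ≠ (k : ℝ) + 1 :=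
          key_lemma (hfn n) j _ hBg (Or.inr hlow) le_rfl hx
        have h2 : x j ≠ (n : ℝ) - k :=
          key_lemma (hfn n) j _ hBg (Or.inl hhigh) le_rfl hx
        constructor
        · push_cast
          exact lt_of_le_of_ne (hlow x hxB) (Ne.symm h1)
        · have := lt_of_le_of_ne (hhigh x hxB) h2
          push_cast
          linarith
    have hempty : peel (gridSet (m + 1) n) (n * f n) = ∅ := by
      ext x
      simp only [Set.mem_empty_iff_false, iff_false]
      intro hx
      have hxg := peel_subset _ _ hx
      have hj := shell n x hx 0
      have hb := grid_bounds hxg 0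
      linarith [hj.1, hb.2]
    calc layerNumber (gridSet (m + 1) n) ≤ n * f n :=
        Nat.sInf_le (show n * f n ∈ {i | peel (gridSet (m + 1) n) i = ∅} from hempty)
      _ = 1 * n * f n := by ring
end
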